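/- Suppose the system ẋ = A(t)x is uniformly asymptotically stable and let x be any solution. Then for all t ≥ t₀: (λ_min[H(t₀)]/λ_max[H(t)])^{1/2} · ‖x(t₀)‖_I · exp(−(1/2)·∫_{t₀}^t dτ/λ_min[H(τ)]) ≤ ‖x(t)‖_I ≤ (λ_max[H(t₀)]/λ_min[H(t)])^{1/2} · ‖x(t₀)‖_I · exp(−(1/2)·∫_{t₀}^t dτ/λ_max[H(τ)]), where H(t) = ∫_t^∞ Φ(τ,t)ᵀ·Φ(τ,t) dτ. -/

import Mathlib

open scoped Matrix
open scoped Matrix.Norms.L2Operator  -- `‖·‖` on matrices is the operator norm induced by the Euclidean norm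
open Set MeasureTheory

/-- The Euclidean norm on `ℝⁿ` (denoted `‖·‖_I` in the paper). -/
noncomputable def euclNorm {n : ℕ} (x : Fin n → ℝ) : ℝ :=
  Real.sqrt (x ⬝ᵥ x)

/-- The largest (real) eigenvalue of a matrix, as the supremum of its real spectrum.
For a real symmetric matrix this is `λ_max`. -/
noncomputable def lambdaMax {n : ℕ} (M : Matrix (Fin n) (Fin n) ℝ) : ℝ :=
  sSup (spectrum ℝ M)

/-- The smallest (real) eigenvalue of a matrix, as the infimum of its real spectrum.
For a real symmetric matrix this is `λ_min`. -/
noncomputable def lambdaMin {n : ℕ} (M : Matrix (Fin n) (Fin n) ℝ) : ℝ :=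
  sInf (spectrum ℝ M)

/-- `H(t) = ∫_t^∞ Φ(τ,t)ᵀ Φ(τ,t) dτ`. -/
noncomputable def Hmat {n : ℕ} (Φ : ℝ → ℝ → Matrix (Fin n) (Fin n) ℝ) (t : ℝ) :
    Matrix (Fin n) (Fin n) ℝ :=
  ∫ τ in Ioi t, (Φ τ t)ᵀ * Φ τ t

/-!
Along a solution, `V(t) = x(t)ᵀ H(t) x(t)` equals `∫_t^∞ ‖x(τ)‖² dτ`, because
`x(τ) = Φ(τ,t) x(t)`. Hence `V' = -‖x‖²`, and the Rayleigh bounds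
`λ_min[H] ‖x‖² ≤ V ≤ λ_max[H] ‖x‖²` turn this into `-V/λ_min[H] ≤ V' ≤ -V/λ_max[H]`.
Integrating `(log V)'` gives `V(t₀) e^{-∫ 1/λ_min} ≤ V(t) ≤ V(t₀) e^{-∫ 1/λ_max}`; the Rayleigh
bounds at `t₀` and `t` and a square root give the claim. The exponents integrate continuous
functions, since `H` is continuous and positive definite and `λ_min`, `λ_max` are 1-Lipschitz in
the operator norm.
-/

open Topology

section Spectral

variable {n : ℕ}

lemma dotProduct_self_nonneg (y : Fin n → ℝ) : 0 ≤ y ⬝ᵥ y := by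
  simpa using dotProduct_star_self_nonneg y

lemma euclNorm_eq_norm_toLp (y : Fin n → ℝ) : euclNorm y = ‖WithLp.toLp 2 y‖ := by
  rw [euclNorm, ← Real.sqrt_sq (norm_nonneg _), ← real_inner_self_eq_norm_sq,
    EuclideanSpace.inner_toLp_toLp, star_trivial]

lemma sq_euclNorm (y : Fin n → ℝ) : euclNorm y ^ 2 = y ⬝ᵥ y :=
  Real.sq_sqrt (dotProduct_self_nonneg y)

lemma dotProduct_mulVec_le_norm_mul (P : Matrix (Fin n) (Fin n) ℝ) (y : Fin n → ℝ) :
    y ⬝ᵥ (P *ᵥ y) ≤ ‖P‖ * (y ⬝ᵥ y) :=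
  calc y ⬝ᵥ (P *ᵥ y) = inner ℝ (WithLp.toLp 2 (P *ᵥ y)) (WithLp.toLp 2 y) := by
        rw [EuclideanSpace.inner_toLp_toLp, star_trivial]
    _ ≤ ‖WithLp.toLp 2 (P *ᵥ y)‖ * ‖WithLp.toLp 2 y‖ := real_inner_le_norm _ _
    _ ≤ ‖P‖ * ‖WithLp.toLp 2 y‖ * ‖WithLp.toLp 2 y‖ := by
        gcongr; exact P.l2_opNorm_mulVec (WithLp.toLp 2 y)
    _ = ‖P‖ * (y ⬝ᵥ y) := by rw [mul_assoc, ← euclNorm_eq_norm_toLp, ← sq, sq_euclNorm]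

lemma lambdaMin_eq_neg_lambdaMax_neg (M : Matrix (Fin n) (Fin n) ℝ) :
    lambdaMin M = -lambdaMax (-M) := by
  rw [lambdaMin, Real.sInf_def, spectrum.neg_eq, lambdaMax]

lemma Matrix.IsHermitian.dotProduct_mulVec_le_lambdaMax_mul {M : Matrix (Fin n) (Fin n) ℝ}
    (hM : M.IsHermitian) (y : Fin n → ℝ) : y ⬝ᵥ (M *ᵥ y) ≤ lambdaMax M * (y ⬝ᵥ y) := by
  have hpsd : (algebraMap ℝ _ (lambdaMax M) - M).PosSemidef := by
    refine Matrix.posSemidef_iff_isHermitian_and_spectrum_nonneg.mpr ⟨?_, ?_⟩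
    · refine Matrix.IsHermitian.sub ?_ hM
      rw [Matrix.algebraMap_eq_diagonal]
      exact Matrix.isHermitian_diagonal _
    · rw [← spectrum.singleton_sub_eq]
      rintro _ ⟨_, rfl, μ, hμ, rfl⟩
      exact sub_nonneg.mpr (le_csSup M.finite_real_spectrum.bddAbove hμ)
  have := hpsd.dotProduct_mulVec_nonneg y
  rw [star_trivial, Matrix.sub_mulVec, dotProduct_sub, Algebra.algebraMap_eq_smul_one,
    Matrix.smul_mulVec, Matrix.one_mulVec, dotProduct_smul, smul_eq_mul] at this
  linarith

lemma Matrix.IsHermitian.lambdaMin_mul_le_dotProduct_mulVec {M : Matrix (Fin n) (Fin n) ℝ}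
    (hM : M.IsHermitian) (y : Fin n → ℝ) : lambdaMin M * (y ⬝ᵥ y) ≤ y ⬝ᵥ (M *ᵥ y) := by
  have := hM.neg.dotProduct_mulVec_le_lambdaMax_mul y
  rw [Matrix.neg_mulVec, dotProduct_neg] at this
  rw [lambdaMin_eq_neg_lambdaMax_neg]
  linarith

lemma Matrix.IsHermitian.lambdaMax_le_of_forall_dotProduct_mulVec_le [NeZero n]
    {M : Matrix (Fin n) (Fin n) ℝ} (hM : M.IsHermitian) {c : ℝ}
    (h : ∀ y, y ⬝ᵥ (M *ᵥ y) ≤ c * (y ⬝ᵥ y)) : lambdaMax M ≤ c := by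
  rw [lambdaMax, hM.spectrum_real_eq_range_eigenvalues]
  refine csSup_le (range_nonempty _) ?_
  rintro _ ⟨i, rfl⟩
  have hunit : ⇑(hM.eigenvectorBasis i) ⬝ᵥ ⇑(hM.eigenvectorBasis i) = 1 := by
    have := real_inner_self_eq_norm_sq (hM.eigenvectorBasis i)
    rw [hM.eigenvectorBasis.orthonormal.1 i, EuclideanSpace.inner_eq_star_dotProduct,
      star_trivial] at this
    simpa using this
  simpa [hM.mulVec_eigenvectorBasis, hunit] using h (hM.eigenvectorBasis i)

lemma Matrix.IsHermitian.lambdaMax_le_add_norm_sub [NeZero n] {M N : Matrix (Fin n) (Fin n) ℝ}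
    (hM : M.IsHermitian) (hN : N.IsHermitian) : lambdaMax M ≤ lambdaMax N + ‖M - N‖ :=
  hM.lambdaMax_le_of_forall_dotProduct_mulVec_le fun y => by
    have hsplit : y ⬝ᵥ (M *ᵥ y) = y ⬝ᵥ (N *ᵥ y) + y ⬝ᵥ ((M - N) *ᵥ y) := by
      rw [Matrix.sub_mulVec, dotProduct_sub]; ring
    linarith [hN.dotProduct_mulVec_le_lambdaMax_mul y, dotProduct_mulVec_le_norm_mul (M - N) y]

lemma lipschitzOnWith_lambdaMax [NeZero n] :
    LipschitzOnWith 1 lambdaMax {M : Matrix (Fin n) (Fin n) ℝ | M.IsHermitian} := by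
  refine LipschitzOnWith.of_dist_le_mul fun M hM N hN => ?_
  rw [NNReal.coe_one, one_mul, Real.dist_eq, dist_eq_norm, abs_sub_le_iff]
  constructor
  · linarith [hM.lambdaMax_le_add_norm_sub hN]
  · linarith [hN.lambdaMax_le_add_norm_sub hM, norm_sub_rev M N]

lemma lipschitzOnWith_lambdaMin [NeZero n] :
    LipschitzOnWith 1 lambdaMin {M : Matrix (Fin n) (Fin n) ℝ | M.IsHermitian} := by
  refine LipschitzOnWith.of_dist_le_mul fun M hM N hN => ?_
  rw [lambdaMin_eq_neg_lambdaMax_neg, lambdaMin_eq_neg_lambdaMax_neg, dist_neg_neg,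
    ← dist_neg_neg M]
  exact lipschitzOnWith_lambdaMax.dist_le_mul _ (Matrix.IsHermitian.neg hM) _
    (Matrix.IsHermitian.neg hN)

lemma Matrix.PosDef.lambdaMin_pos [NeZero n] {M : Matrix (Fin n) (Fin n) ℝ} (hM : M.PosDef) :
    0 < lambdaMin M := by
  obtain ⟨i, hi⟩ : lambdaMin M ∈ range hM.isHermitian.eigenvalues := by
    rw [lambdaMin, hM.isHermitian.spectrum_real_eq_range_eigenvalues]
    exact (range_nonempty _).csInf_mem (finite_range _)
  exact hi ▸ hM.eigenvalues_pos i

lemma Matrix.PosDef.lambdaMax_pos [NeZero n] {M : Matrix (Fin n) (Fin n) ℝ} (hM : M.PosDef) :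
    0 < lambdaMax M := by
  obtain ⟨i, hi⟩ : lambdaMax M ∈ range hM.isHermitian.eigenvalues := by
    rw [lambdaMax, hM.isHermitian.spectrum_real_eq_range_eigenvalues]
    exact (range_nonempty _).csSup_mem (finite_range _)
  exact hi ▸ hM.eigenvalues_pos i

end Spectral

lemma hasDerivWithinAt_setIntegral_Ioi {E : Type*} [NormedAddCommGroup E] [NormedSpace ℝ E]
    [CompleteSpace E] {f : ℝ → E} {a b : ℝ} (hf : ContinuousOn f (Ici a))
    (hfi : IntegrableOn f (Ioi a)) (hb : b ∈ Ici a) :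
    HasDerivWithinAt (fun u => ∫ τ in Ioi u, f τ) (-f b) (Ici a) b := by
  have hsplit : ∀ u ∈ Ici a, ∫ τ in Ioi u, f τ = (∫ τ in Ioi a, f τ) - ∫ τ in a..u, f τ := by
    intro u hu
    rw [intervalIntegral.integral_of_le hu, eq_sub_iff_add_eq, add_comm,
      ← setIntegral_union (Ioc_disjoint_Ioi le_rfl) measurableSet_Ioi
        (hfi.mono_set Ioc_subset_Ioi_self) (hfi.mono_set (Ioi_subset_Ioi hu)),
      Ioc_union_Ioi_eq_Ioi hu]
  have hfi' : IntervalIntegrable f volume a b :=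
    (hf.mono (uIcc_of_le hb.out ▸ Icc_subset_Ici_self)).intervalIntegrable
  have hmeas : StronglyMeasurableAtFilter f (𝓝[Ici a] b) :=
    ⟨Ici a, self_mem_nhdsWithin, hf.aestronglyMeasurable measurableSet_Ici⟩
  have hprim : HasDerivWithinAt (fun u => ∫ τ in a..u, f τ) (f b) (Ici a) b := by
    rcases eq_or_lt_of_le hb.out with rfl | hab
    · exact intervalIntegral.integral_hasDerivWithinAt_right (t := Ioi a) hfi'
        (hmeas.filter_mono (nhdsWithin_mono _ Ioi_subset_Ici_self))
        ((hf a hb).mono Ioi_subset_Ici_self)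
    · rw [nhdsWithin_eq_nhds.mpr (Ici_mem_nhds hab)] at hmeas
      exact (intervalIntegral.integral_hasDerivAt_right hfi' hmeas
        ((hf b hb).continuousAt (Ici_mem_nhds hab))).hasDerivWithinAt
  simpa using ((hasDerivWithinAt_const b (Ici a) (∫ τ in Ioi a, f τ)).sub hprim).congr
    (fun u hu => hsplit u hu) (hsplit b hb)

lemma le_mul_exp_integral_of_hasDerivWithinAt {f f' φ : ℝ → ℝ} {a b : ℝ} (hab : a ≤ b)
    (hf : ContinuousOn f (Icc a b)) (hpos : ∀ x ∈ Icc a b, 0 < f x)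
    (hderiv : ∀ x ∈ Ioo a b, HasDerivWithinAt f (f' x) (Ioi x) x)
    (hφ : IntegrableOn φ (Icc a b)) (hle : ∀ x ∈ Ioo a b, f' x ≤ φ x * f x) :
    f b ≤ f a * Real.exp (∫ x in a..b, φ x) := by
  have hlog := intervalIntegral.sub_le_integral_of_hasDeriv_right_of_le hab
    (hf.log fun x hx => (hpos x hx).ne')
    (fun x hx => (hderiv x hx).log (hpos x (Ioo_subset_Icc_self hx)).ne') hφ
    (fun x hx => (div_le_iff₀ (hpos x (Ioo_subset_Icc_self hx))).mpr (hle x hx))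
  calc f b = Real.exp (Real.log (f b)) := (Real.exp_log (hpos b (right_mem_Icc.mpr hab))).symm
    _ ≤ Real.exp (Real.log (f a) + ∫ x in a..b, φ x) := Real.exp_le_exp.mpr (by linarith)
    _ = f a * Real.exp (∫ x in a..b, φ x) := by
      rw [Real.exp_add, Real.exp_log (hpos a (left_mem_Icc.mpr hab))]

lemma mul_exp_integral_le_of_hasDerivWithinAt {f f' φ : ℝ → ℝ} {a b : ℝ} (hab : a ≤ b)
    (hf : ContinuousOn f (Icc a b)) (hpos : ∀ x ∈ Icc a b, 0 < f x)
    (hderiv : ∀ x ∈ Ioo a b, HasDerivWithinAt f (f' x) (Ioi x) x)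
    (hφ : IntegrableOn φ (Icc a b)) (hle : ∀ x ∈ Ioo a b, φ x * f x ≤ f' x) :
    f a * Real.exp (∫ x in a..b, φ x) ≤ f b := by
  have hlog := intervalIntegral.integral_le_sub_of_hasDeriv_right_of_le hab
    (hf.log fun x hx => (hpos x hx).ne')
    (fun x hx => (hderiv x hx).log (hpos x (Ioo_subset_Icc_self hx)).ne') hφ
    (fun x hx => (le_div_iff₀ (hpos x (Ioo_subset_Icc_self hx))).mpr (hle x hx))
  calc f a * Real.exp (∫ x in a..b, φ x)
      = Real.exp (Real.log (f a) + ∫ x in a..b, φ x) := by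
        rw [Real.exp_add, Real.exp_log (hpos a (left_mem_Icc.mpr hab))]
    _ ≤ Real.exp (Real.log (f b)) := Real.exp_le_exp.mpr (by linarith)
    _ = f b := Real.exp_log (hpos b (right_mem_Icc.mpr hab))

lemma IsCompact.exists_lipschitzWith_mulVec {n : ℕ} {A : ℝ → Matrix (Fin n) (Fin n) ℝ}
    {K : Set ℝ} (hK : IsCompact K) (hA : ContinuousOn A K) :
    ∃ C, ∀ τ ∈ K, LipschitzWith C (fun y : Fin n → ℝ => A τ *ᵥ y) := by
  let toCLM : Matrix (Fin n) (Fin n) ℝ ≃ₗ[ℝ] ((Fin n → ℝ) →L[ℝ] (Fin n → ℝ)) :=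
    Matrix.toLin'.trans LinearMap.toContinuousLinearMap
  obtain ⟨C, hC⟩ := hK.exists_bound_of_continuousOn
    ((LinearMap.continuous_of_finiteDimensional toCLM.toLinearMap).comp_continuousOn hA)
  refine ⟨C.toNNReal, fun τ hτ => (toCLM (A τ)).lipschitz.weaken ?_⟩
  rw [← NNReal.coe_le_coe, coe_nnnorm, Real.coe_toNNReal']
  exact (hC τ hτ).trans (le_max_left _ _)

lemma HasDerivWithinAt.matrix_mulVec_const {n : ℕ} {F : ℝ → Matrix (Fin n) (Fin n) ℝ}
    {F' : Matrix (Fin n) (Fin n) ℝ} {s : Set ℝ} {t : ℝ} (h : HasDerivWithinAt F F' s t)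
    (c : Fin n → ℝ) : HasDerivWithinAt (fun τ => F τ *ᵥ c) (F' *ᵥ c) s t :=
  (LinearMap.toContinuousLinearMap (LinearMap.applyₗ c ∘ₗ
    (Matrix.toLin' : Matrix (Fin n) (Fin n) ℝ ≃ₗ[ℝ] _).toLinearMap)).hasFDerivAt
    |>.comp_hasDerivWithinAt t h

namespace LinearODE

variable {n : ℕ}

def IsSolution (A : ℝ → Matrix (Fin n) (Fin n) ℝ) (t₀ : ℝ) (x : ℝ → Fin n → ℝ) : Prop :=
  ∀ t ∈ Ici t₀, HasDerivWithinAt x (A t *ᵥ x t) (Ici t₀) t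

structure IsTransitionMatrix (A : ℝ → Matrix (Fin n) (Fin n) ℝ) (t₀ : ℝ)
    (Φ : ℝ → ℝ → Matrix (Fin n) (Fin n) ℝ) : Prop where
  apply_self : ∀ τ ∈ Ici t₀, Φ τ τ = 1
  hasDerivWithinAt : ∀ τ ∈ Ici t₀, ∀ t ∈ Ici t₀,
    HasDerivWithinAt (fun s => Φ s τ) (A t * Φ t τ) (Ici t₀) t

def IsUniformlyExpStable (Φ : ℝ → ℝ → Matrix (Fin n) (Fin n) ℝ) (t₀ γ lam : ℝ) : Prop :=
  ∀ τ ∈ Ici t₀, ∀ t ∈ Ici τ, ‖Φ t τ‖ ≤ γ * Real.exp (-lam * (t - τ))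

variable {t₀ γ lam : ℝ} {A : ℝ → Matrix (Fin n) (Fin n) ℝ}
  {Φ : ℝ → ℝ → Matrix (Fin n) (Fin n) ℝ} {x : ℝ → Fin n → ℝ}

lemma IsSolution.continuousOn (hx : IsSolution A t₀ x) : ContinuousOn x (Ici t₀) :=
  fun t ht => (hx t ht).continuousWithinAt

lemma IsSolution.eqOn (hA : ContinuousOn A (Ici t₀)) {f g : ℝ → Fin n → ℝ}
    (hf : IsSolution A t₀ f) (hg : IsSolution A t₀ g) {s : ℝ} (hs : s ∈ Ici t₀)
    (hfg : f s = g s) : EqOn f g (Ici t₀) := by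
  intro t ht
  obtain ⟨C, hC⟩ := (isCompact_Icc (a := t₀) (b := max s t)).exists_lipschitzWith_mulVec
    (hA.mono Icc_subset_Ici_self)
  have hlip : ∀ τ ∈ Icc t₀ (max s t), LipschitzOnWith C (fun y => A τ *ᵥ y) univ :=
    fun τ hτ => (hC τ hτ).lipschitzOnWith
  rcases le_total s t with hst | hts
  · have hsub : Icc s t ⊆ Icc t₀ (max s t) := Icc_subset_Icc hs (le_max_right _ _)
    have hderiv : ∀ {y}, IsSolution A t₀ y → ∀ τ ∈ Ico s t,
        HasDerivWithinAt y (A τ *ᵥ y τ) (Ici τ) τ := fun hy τ hτ =>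
      have hτ' : τ ∈ Ici t₀ := (hsub (Ico_subset_Icc_self hτ)).1
      (hy τ hτ').mono (Ici_subset_Ici.mpr hτ')
    exact ODE_solution_unique_of_mem_Icc_right
      (fun τ hτ => hlip τ (hsub (Ico_subset_Icc_self hτ)))
      (hf.continuousOn.mono (hsub.trans Icc_subset_Ici_self)) (hderiv hf) (fun _ _ => mem_univ _)
      (hg.continuousOn.mono (hsub.trans Icc_subset_Ici_self)) (hderiv hg) (fun _ _ => mem_univ _)
      hfg ⟨hst, le_rfl⟩
  · have hsub : Icc t s ⊆ Icc t₀ (max s t) := Icc_subset_Icc ht (le_max_left _ _)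
    have hderiv : ∀ {y}, IsSolution A t₀ y → ∀ τ ∈ Ioc t s,
        HasDerivWithinAt y (A τ *ᵥ y τ) (Iic τ) τ := fun hy τ hτ =>
      ((hy τ (le_trans ht hτ.1.le)).hasDerivAt
        (Ici_mem_nhds (lt_of_le_of_lt ht hτ.1))).hasDerivWithinAt
    exact ODE_solution_unique_of_mem_Icc_left
      (fun τ hτ => hlip τ (hsub (Ioc_subset_Icc_self hτ)))
      (hf.continuousOn.mono (hsub.trans Icc_subset_Ici_self)) (hderiv hf) (fun _ _ => mem_univ _)
      (hg.continuousOn.mono (hsub.trans Icc_subset_Ici_self)) (hderiv hg) (fun _ _ => mem_univ _)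
      hfg ⟨le_rfl, hts⟩

namespace IsTransitionMatrix

lemma continuousOn (hΦ : IsTransitionMatrix A t₀ Φ) {s : ℝ} (hs : s ∈ Ici t₀) :
    ContinuousOn (fun τ => Φ τ s) (Ici t₀) :=
  fun τ hτ => (hΦ.hasDerivWithinAt s hs τ hτ).continuousWithinAt

lemma isSolution_mulVec (hΦ : IsTransitionMatrix A t₀ Φ) {s : ℝ} (hs : s ∈ Ici t₀)
    (c : Fin n → ℝ) : IsSolution A t₀ (fun τ => Φ τ s *ᵥ c) := fun t ht => by
  simpa only [Matrix.mulVec_mulVec] using (hΦ.hasDerivWithinAt s hs t ht).matrix_mulVec_const c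

lemma mul_eq (hA : ContinuousOn A (Ici t₀)) (hΦ : IsTransitionMatrix A t₀ Φ) {s t u : ℝ}
    (hs : s ∈ Ici t₀) (ht : t ∈ Ici t₀) (hu : u ∈ Ici t₀) : Φ u t * Φ t s = Φ u s := by
  refine Matrix.ext_iff_mulVec.mpr fun c => ?_
  rw [← Matrix.mulVec_mulVec]
  refine (hΦ.isSolution_mulVec ht (Φ t s *ᵥ c)).eqOn hA (hΦ.isSolution_mulVec hs c) ht ?_ hu
  simp only [hΦ.apply_self t ht, Matrix.one_mulVec]

lemma mul_eq_one (hA : ContinuousOn A (Ici t₀)) (hΦ : IsTransitionMatrix A t₀ Φ) {s t : ℝ}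
    (hs : s ∈ Ici t₀) (ht : t ∈ Ici t₀) : Φ s t * Φ t s = 1 := by
  rw [hΦ.mul_eq hA hs ht hs, hΦ.apply_self s hs]

/-- `Φ t ·` is continuous because it is the inverse of `Φ · t`. -/
lemma continuousOn_initial (hA : ContinuousOn A (Ici t₀)) (hΦ : IsTransitionMatrix A t₀ Φ) {t : ℝ}
    (ht : t ∈ Ici t₀) : ContinuousOn (fun s => Φ t s) (Ici t₀) := by
  have hinv : ∀ s ∈ Ici t₀, Φ t s = Ring.inverse (Φ s t) := fun s hs =>
    (Ring.inverse_unit ⟨Φ s t, Φ t s, hΦ.mul_eq_one hA hs ht, hΦ.mul_eq_one hA ht hs⟩).symm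
  intro s hs
  refine ((NormedRing.inverse_continuousAt
    ⟨Φ s t, Φ t s, hΦ.mul_eq_one hA hs ht, hΦ.mul_eq_one hA ht hs⟩).comp_continuousWithinAt
    (f := fun s' => Φ s' t) (hΦ.continuousOn ht s hs)).congr hinv (hinv s hs)

lemma continuousOn_transpose_mul_self (hΦ : IsTransitionMatrix A t₀ Φ) {s : ℝ}
    (hs : s ∈ Ici t₀) : ContinuousOn (fun τ => (Φ τ s)ᵀ * Φ τ s) (Ici t₀) :=
  (continuous_id.matrix_transpose.comp_continuousOn (hΦ.continuousOn hs)).mul (hΦ.continuousOn hs)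

end IsTransitionMatrix

lemma IsSolution.eq_mulVec (hA : ContinuousOn A (Ici t₀)) (hΦ : IsTransitionMatrix A t₀ Φ)
    (hx : IsSolution A t₀ x) {s : ℝ} (hs : s ∈ Ici t₀) {t : ℝ} (ht : t ∈ Ici t₀) :
    x t = Φ t s *ᵥ x s :=
  hx.eqOn hA (hΦ.isSolution_mulVec hs (x s)) hs (by simp [hΦ.apply_self s hs]) ht

noncomputable def quadFormCLM (c : Fin n → ℝ) : Matrix (Fin n) (Fin n) ℝ →L[ℝ] ℝ :=
  LinearMap.toContinuousLinearMap
    (LinearMap.applyₗ c ∘ₗ LinearMap.applyₗ c ∘ₗ (Matrix.toLinearMap₂' ℝ).toLinearMap)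

lemma quadFormCLM_apply (c : Fin n → ℝ) (M : Matrix (Fin n) (Fin n) ℝ) :
    quadFormCLM c M = c ⬝ᵥ (M *ᵥ c) :=
  Matrix.toLinearMap₂'_apply' M c c

lemma quadFormCLM_transpose_mul_self (c : Fin n → ℝ) (M : Matrix (Fin n) (Fin n) ℝ) :
    quadFormCLM c (Mᵀ * M) = (M *ᵥ c) ⬝ᵥ (M *ᵥ c) := by
  rw [quadFormCLM_apply, ← Matrix.mulVec_mulVec, Matrix.dotProduct_mulVec, Matrix.vecMul_transpose]

lemma isHermitian_Hmat (Φ : ℝ → ℝ → Matrix (Fin n) (Fin n) ℝ) (s : ℝ) :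
    (Hmat Φ s).IsHermitian := by
  rw [Matrix.IsHermitian, Matrix.conjTranspose_eq_transpose_of_trivial, Hmat]
  have := (Matrix.transposeLinearEquiv (Fin n) (Fin n) ℝ ℝ).toContinuousLinearEquiv
    |>.integral_comp_comm (μ := volume.restrict (Ioi s)) (fun τ => (Φ τ s)ᵀ * Φ τ s)
  simpa [Matrix.transpose_mul] using this.symm

namespace IsUniformlyExpStable

variable (hA : ContinuousOn A (Ici t₀)) (hΦ : IsTransitionMatrix A t₀ Φ)
  (hUAS : IsUniformlyExpStable Φ t₀ γ lam) (hlam : 0 < lam)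

include hΦ hUAS hlam in
lemma integrableOn_transpose_mul_self {s : ℝ} (hs : s ∈ Ici t₀) :
    IntegrableOn (fun τ => (Φ τ s)ᵀ * Φ τ s) (Ioi s) := by
  have hdom : IntegrableOn (fun τ => γ ^ 2 * Real.exp (2 * lam * s) * Real.exp (-(2 * lam) * τ))
      (Ioi s) := (exp_neg_integrableOn_Ioi s (by positivity)).const_mul _
  refine hdom.mono' (((hΦ.continuousOn_transpose_mul_self hs).mono
    (Ioi_subset_Ici_self.trans (Ici_subset_Ici.mpr hs))).aestronglyMeasurable measurableSet_Ioi) ?_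
  refine (ae_restrict_iff' measurableSet_Ioi).mpr (.of_forall fun τ hτ => ?_)
  calc ‖(Φ τ s)ᵀ * Φ τ s‖ = ‖Φ τ s‖ ^ 2 := by
        rw [← Matrix.conjTranspose_eq_transpose_of_trivial,
          Matrix.l2_opNorm_conjTranspose_mul_self, sq]
    _ ≤ (γ * Real.exp (-lam * (τ - s))) ^ 2 :=
        pow_le_pow_left₀ (norm_nonneg _) (hUAS s hs τ hτ.out.le) 2
    _ = γ ^ 2 * Real.exp (2 * lam * s) * Real.exp (-(2 * lam) * τ) := by
        rw [mul_pow, ← Real.exp_nat_mul, mul_assoc, ← Real.exp_add]; ring_nf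

include hΦ hUAS hlam in
lemma integrableOn_dotProduct_self_mulVec {s : ℝ} (hs : s ∈ Ici t₀) (c : Fin n → ℝ) :
    IntegrableOn (fun τ => (Φ τ s *ᵥ c) ⬝ᵥ (Φ τ s *ᵥ c)) (Ioi s) := by
  simpa only [IntegrableOn, quadFormCLM_transpose_mul_self] using
    (quadFormCLM c).integrable_comp (hUAS.integrableOn_transpose_mul_self hΦ hlam hs)

include hΦ hUAS hlam in
lemma dotProduct_Hmat_mulVec {s : ℝ} (hs : s ∈ Ici t₀) (c : Fin n → ℝ) :
    c ⬝ᵥ (Hmat Φ s *ᵥ c) = ∫ τ in Ioi s, (Φ τ s *ᵥ c) ⬝ᵥ (Φ τ s *ᵥ c) := by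
  rw [Hmat, ← quadFormCLM_apply, ← (quadFormCLM c).integral_comp_comm
    (hUAS.integrableOn_transpose_mul_self hΦ hlam hs)]
  simp only [quadFormCLM_transpose_mul_self]

include hA hΦ hUAS hlam in
lemma posDef_Hmat {s : ℝ} (hs : s ∈ Ici t₀) : (Hmat Φ s).PosDef := by
  refine .of_dotProduct_mulVec_pos (isHermitian_Hmat Φ s) fun c hc => ?_
  -- `Φ τ s` is invertible, so the integrand is positive on all of `Ioi s`.
  have hpos : ∀ τ ∈ Ioi s, 0 < (Φ τ s *ᵥ c) ⬝ᵥ (Φ τ s *ᵥ c) := fun τ hτ => by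
    have hτ' : τ ∈ Ici t₀ := le_trans hs hτ.out.le
    refine lt_of_le_of_ne (dotProduct_self_nonneg _) (Ne.symm fun h0 => hc ?_)
    rw [dotProduct_self_eq_zero] at h0
    rw [← Matrix.one_mulVec c, ← hΦ.mul_eq_one hA hs hτ', ← Matrix.mulVec_mulVec, h0,
      Matrix.mulVec_zero]
  rw [star_trivial, hUAS.dotProduct_Hmat_mulVec hΦ hlam hs, setIntegral_pos_iff_support_of_nonneg_ae
    ((ae_restrict_iff' measurableSet_Ioi).mpr (.of_forall fun τ hτ => (hpos τ hτ).le))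
    (hUAS.integrableOn_dotProduct_self_mulVec hΦ hlam hs c),
    inter_eq_right.mpr fun τ hτ => Function.mem_support.mpr (hpos τ hτ).ne', Real.volume_Ioi]
  exact ENNReal.zero_lt_top

include hA hΦ hUAS hlam in
lemma continuousOn_Hmat : ContinuousOn (Hmat Φ) (Ici t₀) := by
  set P := fun τ => (Φ τ t₀)ᵀ * Φ τ t₀
  have hP : IntegrableOn P (Ioi t₀) := hUAS.integrableOn_transpose_mul_self hΦ hlam self_mem_Ici
  have htail : ContinuousOn (fun u => ∫ τ in Ioi u, P τ) (Ici t₀) := fun b hb =>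
    (hasDerivWithinAt_setIntegral_Ioi (hΦ.continuousOn_transpose_mul_self self_mem_Ici) hP
      hb).continuousWithinAt
  have hQ := hΦ.continuousOn_initial hA (self_mem_Ici (a := t₀))
  refine (((continuous_id.matrix_transpose.comp_continuousOn hQ).mul htail).mul hQ).congr
    fun s hs => ?_
  -- `Φ τ s = Φ τ t₀ * Φ t₀ s` pulls the `s`-dependence out of the integrand.
  show Hmat Φ s = (Φ t₀ s)ᵀ * (∫ τ in Ioi s, P τ) * Φ t₀ s
  have hPs : Integrable P (volume.restrict (Ioi s)) := hP.mono_set (Ioi_subset_Ioi hs)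
  rw [Hmat, ← integral_const_mul_of_integrable hPs,
    ← integral_mul_const_of_integrable (hPs.const_mul _)]
  refine setIntegral_congr_fun measurableSet_Ioi fun τ hτ => ?_
  rw [← hΦ.mul_eq hA hs self_mem_Ici (le_trans hs hτ.out.le), Matrix.transpose_mul]
  simp only [P, Matrix.mul_assoc]

include hA hΦ hUAS hlam in
lemma integrableOn_one_div_comp_Hmat {g : Matrix (Fin n) (Fin n) ℝ → ℝ}
    (hg : ContinuousOn g {M | M.IsHermitian}) (hpos : ∀ s ∈ Ici t₀, 0 < g (Hmat Φ s)) (t : ℝ) :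
    IntegrableOn (fun s => 1 / g (Hmat Φ s)) (Icc t₀ t) :=
  ((continuousOn_const.div
    (hg.comp (hUAS.continuousOn_Hmat hA hΦ hlam) fun s _ => isHermitian_Hmat Φ s)
    fun s hs => (hpos s hs).ne').mono Icc_subset_Ici_self).integrableOn_Icc

end IsUniformlyExpStable

variable (hA : ContinuousOn A (Ici t₀)) (hΦ : IsTransitionMatrix A t₀ Φ)
  (hUAS : IsUniformlyExpStable Φ t₀ γ lam) (hlam : 0 < lam) (hx : IsSolution A t₀ x)

include hA hΦ hUAS hlam hx in
lemma IsSolution.setIntegral_Ioi_dotProduct_self {s : ℝ} (hs : s ∈ Ici t₀) :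
    ∫ τ in Ioi s, x τ ⬝ᵥ x τ = x s ⬝ᵥ (Hmat Φ s *ᵥ x s) := by
  rw [hUAS.dotProduct_Hmat_mulVec hΦ hlam hs]
  refine setIntegral_congr_fun measurableSet_Ioi fun τ hτ => ?_
  rw [hx.eq_mulVec hA hΦ hs (le_trans hs hτ.out.le)]

include hA hΦ hUAS hlam hx in
lemma IsSolution.hasDerivWithinAt_setIntegral_Ioi_dotProduct_self {s : ℝ} (hs : s ∈ Ici t₀) :
    HasDerivWithinAt (fun u => ∫ τ in Ioi u, x τ ⬝ᵥ x τ) (-(x s ⬝ᵥ x s)) (Ici t₀) s :=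
  hasDerivWithinAt_setIntegral_Ioi
    ((continuous_id.dotProduct continuous_id).comp_continuousOn hx.continuousOn)
    ((hUAS.integrableOn_dotProduct_self_mulVec hΦ hlam self_mem_Ici (x t₀)).congr_fun
      (fun τ hτ => by beta_reduce; rw [hx.eq_mulVec hA hΦ self_mem_Ici hτ.out.le])
      measurableSet_Ioi) hs

include hA hΦ hUAS hlam hx in
lemma IsSolution.lyapunov_bounds [NeZero n] (hx₀ : x t₀ ≠ 0) {t : ℝ} (ht : t ∈ Ici t₀) :
    x t₀ ⬝ᵥ (Hmat Φ t₀ *ᵥ x t₀) * Real.exp (-∫ τ in t₀..t, 1 / lambdaMin (Hmat Φ τ))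
        ≤ x t ⬝ᵥ (Hmat Φ t *ᵥ x t) ∧
      x t ⬝ᵥ (Hmat Φ t *ᵥ x t)
        ≤ x t₀ ⬝ᵥ (Hmat Φ t₀ *ᵥ x t₀) * Real.exp (-∫ τ in t₀..t, 1 / lambdaMax (Hmat Φ τ)) := by
  set V : ℝ → ℝ := fun u => ∫ τ in Ioi u, x τ ⬝ᵥ x τ
  have hV : ∀ s ∈ Ici t₀, V s = x s ⬝ᵥ (Hmat Φ s *ᵥ x s) := fun s hs =>
    hx.setIntegral_Ioi_dotProduct_self hA hΦ hUAS hlam hs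
  have hpd : ∀ s ∈ Ici t₀, (Hmat Φ s).PosDef := fun s hs => hUAS.posDef_Hmat hA hΦ hlam hs
  have hVpos : ∀ s ∈ Icc t₀ t, 0 < V s := fun s hs => by
    have hxs : x s ≠ 0 := fun h0 => hx₀ <| by
      rw [hx.eq_mulVec hA hΦ hs.1 self_mem_Ici, h0, Matrix.mulVec_zero]
    rw [hV s hs.1]
    simpa using (hpd s hs.1).dotProduct_mulVec_pos hxs
  have hVderiv : ∀ s ∈ Ici t₀, HasDerivWithinAt V (-(x s ⬝ᵥ x s)) (Ici t₀) s := fun s hs =>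
    hx.hasDerivWithinAt_setIntegral_Ioi_dotProduct_self hA hΦ hUAS hlam hs
  have hVcont : ContinuousOn V (Icc t₀ t) := fun s hs =>
    (hVderiv s hs.1).continuousWithinAt.mono Icc_subset_Ici_self
  have hVderiv' : ∀ s ∈ Ioo t₀ t, HasDerivWithinAt V (-(x s ⬝ᵥ x s)) (Ioi s) s := fun s hs =>
    (hVderiv s hs.1.le).mono (Ioi_subset_Ici hs.1.le)
  rw [← hV t₀ self_mem_Ici, ← hV t ht, ← intervalIntegral.integral_neg,
    ← intervalIntegral.integral_neg]
  constructor
  · refine mul_exp_integral_le_of_hasDerivWithinAt ht.out hVcont hVpos hVderiv'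
      (hUAS.integrableOn_one_div_comp_Hmat hA hΦ hlam lipschitzOnWith_lambdaMin.continuousOn
        (fun s hs => (hpd s hs).lambdaMin_pos) t).neg fun s hs => ?_
    have := (isHermitian_Hmat Φ s).lambdaMin_mul_le_dotProduct_mulVec (x s)
    rw [hV s hs.1.le, neg_mul, neg_le_neg_iff, one_div_mul_eq_div,
      le_div_iff₀ (hpd s hs.1.le).lambdaMin_pos]
    linarith
  · refine le_mul_exp_integral_of_hasDerivWithinAt ht.out hVcont hVpos hVderiv'
      (hUAS.integrableOn_one_div_comp_Hmat hA hΦ hlam lipschitzOnWith_lambdaMax.continuousOn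
        (fun s hs => (hpd s hs).lambdaMax_pos) t).neg fun s hs => ?_
    have := (isHermitian_Hmat Φ s).dotProduct_mulVec_le_lambdaMax_mul (x s)
    rw [hV s hs.1.le, neg_mul, neg_le_neg_iff, one_div_mul_eq_div,
      div_le_iff₀ (hpd s hs.1.le).lambdaMax_pos]
    linarith

include hA hΦ hUAS hlam hx in
lemma IsSolution.dotProduct_self_bounds (hx₀ : x t₀ ≠ 0) {t : ℝ} (ht : t ∈ Ici t₀) :
    lambdaMin (Hmat Φ t₀) / lambdaMax (Hmat Φ t) * (x t₀ ⬝ᵥ x t₀) *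
        Real.exp (-∫ τ in t₀..t, 1 / lambdaMin (Hmat Φ τ)) ≤ x t ⬝ᵥ x t ∧
      x t ⬝ᵥ x t ≤ lambdaMax (Hmat Φ t₀) / lambdaMin (Hmat Φ t) * (x t₀ ⬝ᵥ x t₀) *
        Real.exp (-∫ τ in t₀..t, 1 / lambdaMax (Hmat Φ τ)) := by
  have : NeZero n := ⟨by rintro rfl; exact hx₀ (Subsingleton.elim _ _)⟩
  obtain ⟨hlo, hup⟩ := hx.lyapunov_bounds hA hΦ hUAS hlam hx₀ ht
  have hH₀ := isHermitian_Hmat Φ t₀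
  have hH := isHermitian_Hmat Φ t
  have hpd := hUAS.posDef_Hmat hA hΦ hlam ht
  simp only [div_mul_eq_mul_div]
  constructor
  · rw [div_le_iff₀ hpd.lambdaMax_pos]
    calc lambdaMin (Hmat Φ t₀) * (x t₀ ⬝ᵥ x t₀) *
          Real.exp (-∫ τ in t₀..t, 1 / lambdaMin (Hmat Φ τ))
        ≤ x t₀ ⬝ᵥ (Hmat Φ t₀ *ᵥ x t₀) * Real.exp (-∫ τ in t₀..t, 1 / lambdaMin (Hmat Φ τ)) := by
          gcongr; exact hH₀.lambdaMin_mul_le_dotProduct_mulVec _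
      _ ≤ x t ⬝ᵥ (Hmat Φ t *ᵥ x t) := hlo
      _ ≤ x t ⬝ᵥ x t * lambdaMax (Hmat Φ t) := by
          rw [mul_comm]; exact hH.dotProduct_mulVec_le_lambdaMax_mul _
  · rw [le_div_iff₀ hpd.lambdaMin_pos]
    calc x t ⬝ᵥ x t * lambdaMin (Hmat Φ t)
        ≤ x t ⬝ᵥ (Hmat Φ t *ᵥ x t) := by
          rw [mul_comm]; exact hH.lambdaMin_mul_le_dotProduct_mulVec _
      _ ≤ x t₀ ⬝ᵥ (Hmat Φ t₀ *ᵥ x t₀) * Real.exp (-∫ τ in t₀..t, 1 / lambdaMax (Hmat Φ τ)) := hup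
      _ ≤ lambdaMax (Hmat Φ t₀) * (x t₀ ⬝ᵥ x t₀) *
            Real.exp (-∫ τ in t₀..t, 1 / lambdaMax (Hmat Φ τ)) := by
          gcongr; exact hH₀.dotProduct_mulVec_le_lambdaMax_mul _

end LinearODE

lemma sqrt_mul_euclNorm_mul_exp {n : ℕ} (r : ℝ) (y : Fin n → ℝ) (I : ℝ) :
    √r * euclNorm y * Real.exp (-(1 / 2) * I) = √(r * (y ⬝ᵥ y) * Real.exp (-I)) := by
  rw [mul_assoc r, Real.sqrt_mul' r (by positivity [dotProduct_self_nonneg y]),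
    Real.sqrt_mul (dotProduct_self_nonneg y), ← Real.exp_half, euclNorm, mul_assoc]
  ring_nf

theorem stmt11_general {n : ℕ} (t₀ : ℝ) (A : ℝ → Matrix (Fin n) (Fin n) ℝ)
    (hA : ContinuousOn A (Ici t₀))
    (Φ : ℝ → ℝ → Matrix (Fin n) (Fin n) ℝ)
    (hΦ_id : ∀ τ ∈ Ici t₀, Φ τ τ = 1)
    (hΦ_deriv : ∀ τ ∈ Ici t₀, ∀ t ∈ Ici t₀,
      HasDerivWithinAt (fun s => Φ s τ) (A t * Φ t τ) (Ici t₀) t)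
    (γ lam : ℝ) (hlam : 0 < lam)
    (hUAS : ∀ τ ∈ Ici t₀, ∀ t ∈ Ici τ, ‖Φ t τ‖ ≤ γ * Real.exp (-lam * (t - τ)))
    (x : ℝ → Fin n → ℝ)
    (hx : ∀ t ∈ Ici t₀, HasDerivWithinAt x (A t *ᵥ x t) (Ici t₀) t) :
    ∀ t ∈ Ici t₀,
      Real.sqrt (lambdaMin (Hmat Φ t₀) / lambdaMax (Hmat Φ t)) * euclNorm (x t₀) *
          Real.exp (-(1 / 2) * ∫ τ in t₀..t, 1 / lambdaMin (Hmat Φ τ))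
        ≤ euclNorm (x t) ∧
      euclNorm (x t)
        ≤ Real.sqrt (lambdaMax (Hmat Φ t₀) / lambdaMin (Hmat Φ t)) * euclNorm (x t₀) *
            Real.exp (-(1 / 2) * ∫ τ in t₀..t, 1 / lambdaMax (Hmat Φ τ)) := by
  intro t ht
  have hΦ : LinearODE.IsTransitionMatrix A t₀ Φ := ⟨hΦ_id, hΦ_deriv⟩
  by_cases hx₀ : x t₀ = 0
  · have hxt : x t = 0 := by
      rw [LinearODE.IsSolution.eq_mulVec hA hΦ hx self_mem_Ici ht, hx₀, Matrix.mulVec_zero]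
    simp [hxt, hx₀, euclNorm]
  obtain ⟨hlo, hup⟩ := LinearODE.IsSolution.dotProduct_self_bounds hA hΦ hUAS hlam hx hx₀ ht
  rw [sqrt_mul_euclNorm_mul_exp, sqrt_mul_euclNorm_mul_exp]
  exact ⟨Real.sqrt_le_sqrt hlo, Real.sqrt_le_sqrt hup⟩

/-- for a uniformly asymptotically stable system and any solution `x`, for all
`t ≥ t₀`:
`(λ_min[H(t₀)]/λ_max[H(t)])^{1/2} ‖x(t₀)‖ e^{−(1/2)∫_{t₀}^t dτ/λ_min[H(τ)]} ≤ ‖x(t)‖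
  ≤ (λ_max[H(t₀)]/λ_min[H(t)])^{1/2} ‖x(t₀)‖ e^{−(1/2)∫_{t₀}^t dτ/λ_max[H(τ)]}`. -/
theorem stmt11 {n : ℕ} (t₀ : ℝ) (A : ℝ → Matrix (Fin n) (Fin n) ℝ)
    (hA : ContinuousOn A (Ici t₀))
    (Φ : ℝ → ℝ → Matrix (Fin n) (Fin n) ℝ)
    (hΦ_id : ∀ τ ∈ Ici t₀, Φ τ τ = 1)
    (hΦ_deriv : ∀ τ ∈ Ici t₀, ∀ t ∈ Ici t₀,
      HasDerivWithinAt (fun s => Φ s τ) (A t * Φ t τ) (Ici t₀) t)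
    (γ lam : ℝ) (hγ : 0 < γ) (hlam : 0 < lam)
    (hUAS : ∀ τ ∈ Ici t₀, ∀ t ∈ Ici τ, ‖Φ t τ‖ ≤ γ * Real.exp (-lam * (t - τ)))
    (x : ℝ → Fin n → ℝ)
    (hx : ∀ t ∈ Ici t₀, HasDerivWithinAt x (A t *ᵥ x t) (Ici t₀) t) :
    ∀ t ∈ Ici t₀,
      Real.sqrt (lambdaMin (Hmat Φ t₀) / lambdaMax (Hmat Φ t)) * euclNorm (x t₀) *
          Real.exp (-(1 / 2) * ∫ τ in t₀..t, 1 / lambdaMin (Hmat Φ τ))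
        ≤ euclNorm (x t) ∧
      euclNorm (x t)
        ≤ Real.sqrt (lambdaMax (Hmat Φ t₀) / lambdaMin (Hmat Φ t)) * euclNorm (x t₀) *
            Real.exp (-(1 / 2) * ∫ τ in t₀..t, 1 / lambdaMax (Hmat Φ τ)) :=
  stmt11_general t₀ A hA Φ hΦ_id hΦ_deriv γ lam hlam hUAS x hx
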